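/- Let A_n be the autonomous operator sequence defined by A_1 = a_0 and A_{n+1} = Y_n(A_1,...,A_n; a_1,...,a_n). If a_n = n! for all n ≥ 0, then A_n = (-1)^{n+1} 2^n \binom{1/2}{n} n! for all n ≥ 1, where \binom{1/2}{n} is the generalized binomial coefficient. -/

import Mathlib

open Finset

/-- Partial Bell polynomials `B_{n,k}(b₁,…)`, via the standard recurrence
`B_{n+1,k+1} = ∑_{i=0}^{n} C(n,i) b_{i+1} B_{n-i,k}`. -/
noncomputable def partialBell {R : Type*} [Ring R] : ℕ → ℕ → (ℕ → R) → R
  | 0, 0, _ => 1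
  | _ + 1, 0, _ => 0
  | 0, _ + 1, _ => 0
  | n + 1, k + 1, b =>
      ∑ i ∈ Finset.range (n + 1), (n.choose i : R) * b (i + 1) * partialBell (n - i) k b
  termination_by n k _ => k

/-- The `n`-th (complete) Bell polynomial `Y_n(b₁,…,b_n; a₁,…,a_n) = ∑_{k=1}^n B_{n,k} a_k`. -/
noncomputable def bellY {R : Type*} [Ring R] (n : ℕ) (b a : ℕ → R) : R :=
  ∑ k ∈ Finset.Icc 1 n, partialBell n k b * a k

/-- The autonomous operator: `A₁ = a₀`, `A_{n+1} = Y_n(A₁,…,A_n; a₁,…,a_n)`. -/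
noncomputable def autoA {R : Type*} [Ring R] (a : ℕ → R) : ℕ → R
  | 0 => 0
  | 1 => a 0
  | n + 2 => bellY (n + 1) (fun k => if h : k < n + 2 then autoA a k else 0) a
  termination_by n => n

/-- Generalized binomial coefficient `x(x-1)⋯(x-n+1)/n!`. -/
noncomputable def genChoose (x : ℝ) (n : ℕ) : ℝ :=
  (∏ k ∈ Finset.range n, (x - k)) / n.factorial

/-- Rising factorial (Pochhammer symbol) `(x)ₙ = x(x+1)⋯(x+n-1)`. -/
noncomputable def risingFac (x : ℝ) (n : ℕ) : ℝ :=
  ∏ k ∈ Finset.range n, (x + k)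

/-!
The exponential generating function turns partial Bell polynomials into powers,
`∑ₙ B_{n,k}(b) Xⁿ/n! = (egf b)ᵏ / k!`, so `Y_n(b; 0!, 1!, …) = n! [Xⁿ] (1 - egf b)⁻¹`.
For `A = autoA (k!)` the recursion therefore says that `G = egf A` solves `G' = (1 - G)⁻¹`.
Then `((1 - G)²)' = -2`, so `(1 - G)² = 1 - 2X` (that is, `G = 1 - √(1 - 2X)`) and
`(1 - 2X) G' = 1 - G`, whose coefficients give `A_{n+1} = (2n - 1) A_n`. This is also the
recursion of `(-1)^{n+1} 2ⁿ C(1/2, n) n!`, since `C(1/2, n+1) = C(1/2, n) (1/2 - n)/(n + 1)`.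
-/

open PowerSeries

lemma partialBell_congr {R : Type*} [Ring R] {n : ℕ} (k : ℕ) {b b' : ℕ → R}
    (h : ∀ j, 1 ≤ j → j ≤ n → b j = b' j) : partialBell n k b = partialBell n k b' := by
  induction n using Nat.strong_induction_on generalizing k with
  | _ n ih =>
    match n, k with
    | 0, 0 | 0, _ + 1 | _ + 1, 0 => simp [partialBell]
    | n + 1, k + 1 =>
      rw [partialBell, partialBell]
      refine sum_congr rfl fun i hi => ?_
      rw [mem_range] at hi
      rw [h (i + 1) (by omega) (by omega),
        ih (n - i) (by omega) k fun j hj _ => h j hj (by omega)]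

lemma autoA_succ {R : Type*} [Ring R] (a : ℕ → R) {n : ℕ} (hn : 1 ≤ n) :
    autoA a (n + 1) = bellY n (autoA a) a := by
  obtain ⟨m, rfl⟩ := Nat.exists_eq_add_of_le' hn
  rw [autoA, bellY, bellY]
  refine sum_congr rfl fun k _ => congrArg (· * a k) (partialBell_congr k fun j _ hj => ?_)
  rw [dif_pos (by omega)]

section EGF

variable {K : Type*} [Field K]

noncomputable def egf (b : ℕ → K) : K⟦X⟧ :=
  PowerSeries.mk fun n => b n / n.factorial

@[simp]
lemma coeff_egf (b : ℕ → K) (n : ℕ) : coeff n (egf b) = b n / n.factorial :=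
  coeff_mk _ _

@[simp]
lemma constantCoeff_egf (b : ℕ → K) : constantCoeff (egf b) = b 0 := by
  simp [← coeff_zero_eq_constantCoeff_apply]

lemma derivative_egf [CharZero K] (b : ℕ → K) : d⁄dX K (egf b) = egf fun n => b (n + 1) := by
  ext n
  simp only [coeff_derivative, coeff_egf, Nat.factorial_succ]
  push_cast
  field_simp

lemma egf_mul_egf [CharZero K] (f g : ℕ → K) :
    egf f * egf g = egf fun n => ∑ i ∈ range (n + 1), (n.choose i : K) * f i * g (n - i) := by
  ext n
  rw [coeff_mul, Nat.sum_antidiagonal_eq_sum_range_succ_mk, coeff_egf, sum_div]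
  refine sum_congr rfl fun i hi => ?_
  have hi : i ≤ n := Nat.lt_succ_iff.mp (mem_range.mp hi)
  have : (n.factorial : K) ≠ 0 := Nat.cast_ne_zero.mpr n.factorial_ne_zero
  rw [coeff_egf, coeff_egf, Nat.cast_choose K hi]
  field_simp

lemma egf_partialBell [CharZero K] {b : ℕ → K} (hb : b 0 = 0) (k : ℕ) :
    egf (fun n => partialBell n k b) = (k.factorial : K)⁻¹ • egf b ^ k := by
  induction k with
  | zero =>
    ext n
    cases n <;> simp [partialBell, coeff_one]
  | succ k ih =>
    refine derivative.ext ?_ (by simp [partialBell, hb])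
    -- the defining recurrence of `partialBell` is a binomial convolution, i.e. a product of egfs
    have hrec : (fun n => partialBell (n + 1) (k + 1) b) =
        fun n => ∑ i ∈ range (n + 1), (n.choose i : K) * b (i + 1) * partialBell (n - i) k b := by
      ext n; rw [partialBell]
    rw [derivative_egf, hrec, ← egf_mul_egf (fun i => b (i + 1)) fun n => partialBell n k b,
      ← derivative_egf, ih, Derivation.map_smul, derivative_pow, Nat.factorial_succ]
    have hk : ((k + 1 : ℕ) : K) ≠ 0 := Nat.cast_ne_zero.mpr k.succ_ne_zero
    rw [Nat.add_sub_cancel, Nat.cast_mul, mul_inv_rev, mul_smul, mul_assoc, ← nsmul_eq_mul,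
      ← Nat.cast_smul_eq_nsmul K, inv_smul_smul₀ hk, mul_smul_comm, mul_comm]

lemma coeff_inv_one_sub {E : K⟦X⟧} (hE : constantCoeff E = 0) (n : ℕ) :
    coeff n (1 - E)⁻¹ = ∑ k ∈ range (n + 1), coeff n (E ^ k) := by
  have hunit : constantCoeff (1 - E) ≠ 0 := by simp [hE]
  have hdiff : (1 - E)⁻¹ - ∑ k ∈ range (n + 1), E ^ k = (1 - E)⁻¹ * E ^ (n + 1) := by
    rw [show E ^ (n + 1) = 1 - (1 - E) * ∑ k ∈ range (n + 1), E ^ k by rw [mul_neg_geom_sum]; ring,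
      mul_sub, mul_one, ← mul_assoc, PowerSeries.inv_mul_cancel _ hunit, one_mul]
  have hvanish : coeff n ((1 - E)⁻¹ * E ^ (n + 1)) = 0 :=
    X_pow_dvd_iff.mp (dvd_mul_of_dvd_right (pow_dvd_pow_of_dvd (X_dvd_iff.mpr hE) _) _) n
      (Nat.lt_succ_self n)
  rw [← sub_eq_zero, ← map_sum, ← map_sub, hdiff, hvanish]

lemma bellY_factorial [CharZero K] {b : ℕ → K} (hb : b 0 = 0) {n : ℕ} (hn : 1 ≤ n) :
    bellY n b (fun k => (k.factorial : K)) = n.factorial * coeff n (1 - egf b)⁻¹ := by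
  have hterm (k : ℕ) : partialBell n k b * k.factorial = n.factorial * coeff n (egf b ^ k) := by
    have h := congrArg (coeff (R := K) n) (egf_partialBell hb k)
    rw [coeff_egf, coeff_smul, smul_eq_mul] at h
    have : (n.factorial : K) ≠ 0 := Nat.cast_ne_zero.mpr n.factorial_ne_zero
    have : (k.factorial : K) ≠ 0 := Nat.cast_ne_zero.mpr k.factorial_ne_zero
    field_simp at h
    linear_combination h
  rw [coeff_inv_one_sub (by simp [hb]), range_eq_Ico, sum_eq_sum_Ico_succ_bot (by omega),
    pow_zero, coeff_one, if_neg (by omega), zero_add, zero_add, Ico_add_one_right_eq_Icc, bellY,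
    mul_sum]
  exact sum_congr rfl fun k _ => hterm k

lemma derivative_egf_autoA_factorial [CharZero K] :
    d⁄dX K (egf (autoA fun k => (k.factorial : K))) =
      (1 - egf (autoA fun k => (k.factorial : K)))⁻¹ := by
  set A := autoA fun k => (k.factorial : K)
  have hA0 : A 0 = 0 := by simp [A, autoA]
  rw [derivative_egf]
  ext n
  rw [coeff_egf]
  rcases Nat.eq_zero_or_pos n with rfl | hn
  · simp [A, autoA, coeff_zero_eq_constantCoeff, constantCoeff_inv, hA0]
  · have : (n.factorial : K) ≠ 0 := Nat.cast_ne_zero.mpr n.factorial_ne_zero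
    rw [show A (n + 1) = bellY n A (fun k => (k.factorial : K)) from autoA_succ _ hn,
      bellY_factorial hA0 hn]
    field_simp

lemma one_sub_two_X_mul_derivative [CharZero K] {E : K⟦X⟧} (h0 : constantCoeff E = 0)
    (hE : d⁄dX K E = (1 - E)⁻¹) : (1 - 2 * X) * d⁄dX K E = 1 - E := by
  have hunit : constantCoeff (1 - E) ≠ 0 := by simp [h0]
  have hsq : (1 - E) ^ 2 = 1 - 2 * X := by
    refine derivative.ext ?_ (by simp [h0])
    rw [derivative_pow, map_sub, derivative_one, hE, pow_one, zero_sub, mul_neg,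
      mul_assoc, PowerSeries.mul_inv_cancel _ hunit, map_sub, derivative_one, two_mul, map_add,
      derivative_X]
    push_cast
    ring
  rw [← hsq, hE, sq, mul_assoc, PowerSeries.mul_inv_cancel _ hunit, mul_one]

lemma succ_eq_of_one_sub_two_X_mul_derivative_egf [CharZero K] {A : ℕ → K}
    (hA : (1 - 2 * X) * d⁄dX K (egf A) = 1 - egf A) {n : ℕ} (hn : 1 ≤ n) :
    A (n + 1) = (2 * n - 1) * A n := by
  obtain ⟨m, rfl⟩ := Nat.exists_eq_add_of_le' hn
  have h := congrArg (coeff (m + 1)) hA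
  rw [show (1 - 2 * X) * d⁄dX K (egf A) = d⁄dX K (egf A) - X * (2 * d⁄dX K (egf A)) by ring,
    map_sub, coeff_succ_X_mul, derivative_egf, two_mul, map_add, map_sub, coeff_one,
    if_neg m.succ_ne_zero] at h
  simp only [coeff_egf, Nat.factorial_succ, Nat.cast_mul, Nat.cast_add_one] at h
  have hm : (m.factorial : K) ≠ 0 := Nat.cast_ne_zero.mpr m.factorial_ne_zero
  field_simp at h
  push_cast
  linear_combination h

lemma autoA_factorial_succ [CharZero K] {n : ℕ} (hn : 1 ≤ n) :
    autoA (fun k => (k.factorial : K)) (n + 1) =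
      (2 * n - 1) * autoA (fun k => (k.factorial : K)) n :=
  succ_eq_of_one_sub_two_X_mul_derivative_egf
    (one_sub_two_X_mul_derivative (by simp [autoA]) derivative_egf_autoA_factorial) hn

end EGF

lemma genChoose_succ (x : ℝ) (n : ℕ) :
    genChoose x (n + 1) = genChoose x n * (x - n) / (n + 1) := by
  rw [genChoose, genChoose, prod_range_succ, Nat.factorial_succ]
  push_cast
  field_simp

/-- The autonomous operator applied to the sequence `(n!)`:
`A_n = (-1)^{n+1} 2ⁿ C(1/2, n) n!` for `n ≥ 1`. -/
theorem autoA_factorial :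
    ∀ n : ℕ, 1 ≤ n →
      autoA (fun k => (k.factorial : ℝ)) n =
        (-1) ^ (n + 1) * 2 ^ n * genChoose (1 / 2) n * n.factorial := by
  intro n hn
  induction n, hn using Nat.le_induction with
  | base => norm_num [autoA, genChoose]
  | succ m hm ih =>
    rw [autoA_factorial_succ hm, ih, genChoose_succ, Nat.factorial_succ]
    push_cast
    field_simp
    ring
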